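/- Let q, q̃ ∈ L¹(ℝ) with ‖q‖_{L¹} ≤ α and ‖q̃‖_{L¹} ≤ α for some α > 0, let λ ∈ ℂ with Im λ ≥ 0 and λ ≠ 0, and let m and m̃ be bounded measurable functions on ℝ satisfying the Jost integral equations for q and q̃ respectively (with the same λ). Then sup_{x∈ℝ} |m(x) − m̃(x)| ≤ exp(2α/|λ|) · ‖q − q̃‖_{L¹}/|λ|. -/

import Mathlib

/-!
For `Im λ ≥ 0` the kernel satisfies `‖D(y,λ)‖ ≤ 1/|λ|`, so both `m̃` and `m - m̃` satisfy backward
integral inequalities `u x ≤ a + ∫_x^∞ k u` with `k = |q|/|λ|`. Gronwall's inequality in this form,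
`u x ≤ a · exp (∫_x^∞ k)`, holds because `(a + ∫_x^∞ k u) · exp (-∫_x^∞ k)` is absolutely
continuous with almost everywhere nonnegative derivative, hence nondecreasing, and tends to `a`
at `+∞`. With `a = 1` it bounds `|m̃|` by `exp (α/|λ|)`; with `a = exp (α/|λ|) ‖q - q̃‖₁/|λ|` it
gives the estimate for `m - m̃`.
-/

open MeasureTheory

/-- The kernel `D(y,λ) = (e^{2iλy} - 1)/(2iλ)` for `y > 0`, extended by `0`. -/
noncomputable def D (lam : ℂ) (y : ℝ) : ℂ :=
  if 0 < y then (Complex.exp (2 * Complex.I * lam * y) - 1) / (2 * Complex.I * lam) else 0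

open Set Filter Topology

section AbsolutelyContinuous

variable {X Y : Type*} [PseudoMetricSpace X] [PseudoMetricSpace Y] {a b : ℝ}

theorem LipschitzOnWith.comp_absolutelyContinuousOnInterval {f : ℝ → X} {g : X → Y} {K : NNReal}
    {s : Set X} (hg : LipschitzOnWith K g s) (hf : AbsolutelyContinuousOnInterval f a b)
    (hfs : MapsTo f (uIcc a b) s) : AbsolutelyContinuousOnInterval (g ∘ f) a b := by
  have hK := Tendsto.const_mul (K : ℝ) hf
  rw [mul_zero] at hK
  refine squeeze_zero' (Eventually.of_forall fun _ => Finset.sum_nonneg fun _ _ => dist_nonneg)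
    ?_ hK
  rw [eventually_inf_principal]
  filter_upwards with E hE
  rw [Finset.mul_sum]
  gcongr with i hi
  exact hg.dist_le_mul _ (hfs (hE.1 i hi).1) _ (hfs (hE.1 i hi).2)

theorem LocallyLipschitz.comp_absolutelyContinuousOnInterval {F : Type*}
    [SeminormedAddCommGroup F] {f : ℝ → F} {g : F → Y}
    (hg : LocallyLipschitz g) (hf : AbsolutelyContinuousOnInterval f a b) :
    AbsolutelyContinuousOnInterval (g ∘ f) a b := by
  obtain ⟨K, hK⟩ := hg.locallyLipschitzOn.exists_lipschitzOnWith_of_compact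
    (isCompact_uIcc.image_of_continuousOn hf.continuousOn)
  exact hK.comp_absolutelyContinuousOnInterval hf (mapsTo_image _ _)

end AbsolutelyContinuous

section TailIntegral

variable {E : Type*} [NormedAddCommGroup E] [NormedSpace ℝ E]

theorem integral_Ioi_eq_sub_intervalIntegral {f : ℝ → E} (hf : Integrable f) (c x : ℝ) :
    ∫ t in Ioi x, f t = (∫ t in Ioi c, f t) - ∫ t in c..x, f t := by
  rw [← intervalIntegral.integral_Ioi_sub_Ioi' hf.integrableOn hf.integrableOn, sub_sub_cancel]

theorem ae_hasDerivAt_integral_Ioi [CompleteSpace E] {f : ℝ → E} (hf : Integrable f) :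
    ∀ᵐ x, HasDerivAt (fun x => ∫ t in Ioi x, f t) (-f x) x := by
  rw [funext (integral_Ioi_eq_sub_intervalIntegral hf 0)]
  filter_upwards [LocallyIntegrable.ae_hasDerivAt_integral hf.locallyIntegrable] with x hx
  exact (hx 0).const_sub _

theorem absolutelyContinuousOnInterval_integral_Ioi {f : ℝ → ℝ} (hf : Integrable f) (a b : ℝ) :
    AbsolutelyContinuousOnInterval (fun x => ∫ t in Ioi x, f t) a b := by
  rw [funext (integral_Ioi_eq_sub_intervalIntegral hf a)]
  exact (LipschitzWith.const _).lipschitzOnWith.absolutelyContinuousOnInterval.sub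
    (hf.intervalIntegrable.absolutelyContinuousOnInterval_intervalIntegral left_mem_uIcc)

end TailIntegral

theorem le_mul_exp_integral_Ioi_of_le_add_integral_Ioi {k u : ℝ → ℝ} {a : ℝ}
    (hk : Integrable k) (hk0 : 0 ≤ᵐ[volume] k) (hku : Integrable fun t => k t * u t)
    (h : ∀ x, u x ≤ a + ∫ t in Ioi x, k t * u t) (x : ℝ) :
    u x ≤ a * Real.exp (∫ t in Ioi x, k t) := by
  set I := fun x => ∫ t in Ioi x, k t
  set v := fun x => ∫ t in Ioi x, k t * u t
  set w := fun x => (a + v x) * Real.exp (-I x)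
  have hw_mono : ∀ b, x ≤ b → w x ≤ w b := by
    intro b hxb
    have hac : AbsolutelyContinuousOnInterval w x b :=
      ((LipschitzWith.const a).lipschitzOnWith.absolutelyContinuousOnInterval.add
        (absolutelyContinuousOnInterval_integral_Ioi hku x b)).mul
        (Real.contDiff_exp.locallyLipschitz.comp_absolutelyContinuousOnInterval
          (absolutelyContinuousOnInterval_integral_Ioi hk x b).neg)
    have hderiv : 0 ≤ᵐ[volume] deriv w := by
      filter_upwards [ae_hasDerivAt_integral_Ioi hk, ae_hasDerivAt_integral_Ioi hku, hk0]
        with t hI hv hkt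
      have hwt : HasDerivAt w
          (-(k t * u t) * Real.exp (-I t) + (a + v t) * (Real.exp (-I t) * -(-k t))) t :=
        (hv.const_add a).mul hI.neg.exp
      rw [hwt.deriv, Pi.zero_apply]
      have : 0 ≤ k t * Real.exp (-I t) * (a + v t - u t) :=
        mul_nonneg (mul_nonneg hkt (Real.exp_pos _).le) (sub_nonneg.2 (h t))
      linarith
    have := hac.integral_deriv_eq_sub
    have := intervalIntegral.integral_nonneg_of_ae hxb hderiv
    linarith
  have hw_lim : Tendsto w atTop (𝓝 a) := by
    have hI : Tendsto I atTop (𝓝 0) := tendsto_integral_Ioi_zero tendsto_id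
    have hv : Tendsto v atTop (𝓝 0) := tendsto_integral_Ioi_zero tendsto_id
    simpa using (hv.const_add a).mul (hI.neg.rexp)
  have hwa : w x ≤ a := ge_of_tendsto hw_lim ((eventually_ge_atTop x).mono hw_mono)
  calc u x ≤ a + v x := h x
    _ = w x * Real.exp (I x) := by simp [w, mul_assoc, ← Real.exp_add]
    _ ≤ a * Real.exp (I x) := by gcongr

theorem integral_Ioi_const_mul_norm_le {E : Type*} [NormedAddCommGroup E] {q : ℝ → E}
    (hq : Integrable q) {c α : ℝ} (hc : 0 ≤ c) (hqa : ∫ t, ‖q t‖ ≤ α) (x : ℝ) :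
    ∫ t in Ioi x, c * ‖q t‖ ≤ c * α := by
  rw [integral_const_mul]
  gcongr
  exact (setIntegral_le_integral hq.norm (Eventually.of_forall fun t => norm_nonneg _)).trans hqa

theorem norm_mul_sub_mul_le {R : Type*} [NonUnitalSeminormedRing R] (a b c d : R) :
    ‖a * b - c * d‖ ≤ ‖a - c‖ * ‖d‖ + ‖a‖ * ‖b - d‖ := by
  calc ‖a * b - c * d‖ = ‖(a - c) * d + a * (b - d)‖ := by noncomm_ring
    _ ≤ ‖a - c‖ * ‖d‖ + ‖a‖ * ‖b - d‖ :=
      (norm_add_le _ _).trans (add_le_add (norm_mul_le _ _) (norm_mul_le _ _))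

section Jost

variable {lam : ℂ}

theorem measurable_D (lam : ℂ) : Measurable (D lam) :=
  Measurable.ite (measurableSet_lt measurable_const measurable_id)
    (by fun_prop) measurable_const

theorem norm_D_le (him : 0 ≤ lam.im) (y : ℝ) : ‖D lam y‖ ≤ ‖lam‖⁻¹ := by
  unfold D
  split_ifs with hy
  · have hexp : ‖Complex.exp (2 * Complex.I * lam * y)‖ ≤ 1 := by
      have hre : (2 * Complex.I * lam * y).re = -(2 * lam.im * y) := by simp
      rw [Complex.norm_exp, Real.exp_le_one_iff, hre, neg_nonpos]
      positivity
    calc ‖(Complex.exp (2 * Complex.I * lam * y) - 1) / (2 * Complex.I * lam)‖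
        ≤ 2 / (2 * ‖lam‖) := by
          rw [norm_div, norm_mul, norm_mul, Complex.norm_I, Complex.norm_ofNat, mul_one]
          gcongr
          exact (norm_sub_le _ _).trans (by rw [norm_one]; linarith)
      _ = ‖lam‖⁻¹ := by field_simp
  · simp

theorem integrable_D_mul (him : 0 ≤ lam.im) {f : ℝ → ℂ} (hf : Integrable f) (x : ℝ) :
    Integrable fun t => D lam (t - x) * f t :=
  hf.bdd_mul ((measurable_D lam).comp (measurable_id.sub_const x)).aestronglyMeasurable
    (Eventually.of_forall fun t => norm_D_le him (t - x))

theorem norm_integral_Ioi_D_mul_le (him : 0 ≤ lam.im) {f : ℝ → ℂ} (hf : Integrable f) (x : ℝ) :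
    ‖∫ t in Ioi x, D lam (t - x) * f t‖ ≤ ∫ t in Ioi x, ‖lam‖⁻¹ * ‖f t‖ :=
  norm_integral_le_of_norm_le (hf.norm.const_mul _).integrableOn
    (Eventually.of_forall fun t => by
      rw [norm_mul]; exact mul_le_mul_of_nonneg_right (norm_D_le him _) (norm_nonneg _))

variable {q m : ℝ → ℂ}

theorem norm_le_exp_of_jost (him : 0 ≤ lam.im) (hq : Integrable q) (hm : Measurable m)
    {C : ℝ} (hC : ∀ x, ‖m x‖ ≤ C)
    (heq : ∀ x, m x = 1 + ∫ t in Ioi x, D lam (t - x) * q t * m t) (x : ℝ) :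
    ‖m x‖ ≤ Real.exp (∫ t in Ioi x, ‖lam‖⁻¹ * ‖q t‖) := by
  have hqm : Integrable fun t => q t * m t :=
    hq.mul_bdd hm.aestronglyMeasurable (Eventually.of_forall hC)
  have hku : Integrable fun t => ‖lam‖⁻¹ * ‖q t‖ * ‖m t‖ := by
    simpa only [norm_mul, mul_assoc] using hqm.norm.const_mul ‖lam‖⁻¹
  rw [← one_mul (Real.exp _)]
  refine le_mul_exp_integral_Ioi_of_le_add_integral_Ioi (hq.norm.const_mul _)
    (Eventually.of_forall fun t => by positivity) hku (fun y => ?_) x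
  calc ‖m y‖ ≤ 1 + ‖∫ t in Ioi y, D lam (t - y) * (q t * m t)‖ := by
        rw [heq y]
        simpa only [mul_assoc, norm_one] using norm_add_le (1 : ℂ) _
    _ ≤ 1 + ∫ t in Ioi y, ‖lam‖⁻¹ * ‖q t‖ * ‖m t‖ := by
        simpa only [norm_mul, mul_assoc] using
          add_le_add_right (norm_integral_Ioi_D_mul_le him hqm y) 1

theorem integrable_norm_mul_norm_sub {mt : ℝ → ℂ} (hq : Integrable q) (hm : Measurable m)
    (hmt : Measurable mt) {C M : ℝ} (hC : ∀ x, ‖m x‖ ≤ C) (hM : ∀ x, ‖mt x‖ ≤ M) (c : ℝ) :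
    Integrable fun t => c * ‖q t‖ * ‖m t - mt t‖ := by
  have : Integrable fun t => q t * (m t - mt t) :=
    hq.mul_bdd (hm.sub hmt).aestronglyMeasurable
      (Eventually.of_forall fun t => (norm_sub_le _ _).trans (add_le_add (hC t) (hM t)))
  simpa only [norm_mul, mul_assoc] using this.norm.const_mul c

theorem norm_sub_le_integral_of_jost (him : 0 ≤ lam.im) {qt mt : ℝ → ℂ} (hq : Integrable q)
    (hqt : Integrable qt) (hm : Measurable m) (hmt : Measurable mt)
    {C M : ℝ} (hC : ∀ x, ‖m x‖ ≤ C) (hM : ∀ x, ‖mt x‖ ≤ M)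
    (heq : ∀ x, m x = 1 + ∫ t in Ioi x, D lam (t - x) * q t * m t)
    (heqt : ∀ x, mt x = 1 + ∫ t in Ioi x, D lam (t - x) * qt t * mt t) (x : ℝ) :
    ‖m x - mt x‖ ≤ ‖lam‖⁻¹ * M * (∫ t, ‖q t - qt t‖) +
      ∫ t in Ioi x, ‖lam‖⁻¹ * ‖q t‖ * ‖m t - mt t‖ := by
  have hqm : Integrable fun t => q t * m t :=
    hq.mul_bdd hm.aestronglyMeasurable (Eventually.of_forall hC)
  have hqtmt : Integrable fun t => qt t * mt t :=
    hqt.mul_bdd hmt.aestronglyMeasurable (Eventually.of_forall hM)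
  have hqq : Integrable fun t => ‖q t - qt t‖ := (hq.sub hqt).norm
  have hku := integrable_norm_mul_norm_sub hq hm hmt hC hM ‖lam‖⁻¹
  have hI : ∫ t in Ioi x, ‖q t - qt t‖ ≤ ∫ t, ‖q t - qt t‖ :=
    setIntegral_le_integral hqq (Eventually.of_forall fun t => norm_nonneg _)
  have hM0 : 0 ≤ M := (norm_nonneg _).trans (hM 0)
  calc ‖m x - mt x‖ = ‖∫ t in Ioi x, D lam (t - x) * (q t * m t - qt t * mt t)‖ := by
        simp only [heq x, heqt x, add_sub_add_left_eq_sub, mul_assoc, mul_sub]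
        rw [integral_sub (integrable_D_mul him hqm x).integrableOn
          (integrable_D_mul him hqtmt x).integrableOn]
    _ ≤ ∫ t in Ioi x, ‖lam‖⁻¹ * ‖q t * m t - qt t * mt t‖ :=
        norm_integral_Ioi_D_mul_le him (hqm.sub hqtmt) x
    _ ≤ ∫ t in Ioi x, (‖lam‖⁻¹ * M * ‖q t - qt t‖ + ‖lam‖⁻¹ * ‖q t‖ * ‖m t - mt t‖) := by
        refine setIntegral_mono ((hqm.sub hqtmt).norm.const_mul _).integrableOn
          ((hqq.const_mul _).add hku).integrableOn fun t => ?_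
        calc ‖lam‖⁻¹ * ‖q t * m t - qt t * mt t‖
            ≤ ‖lam‖⁻¹ * (‖q t - qt t‖ * M + ‖q t‖ * ‖m t - mt t‖) := by
              gcongr
              exact (norm_mul_sub_mul_le _ _ _ _).trans (by gcongr; exact hM t)
          _ = _ := by ring
    _ = ‖lam‖⁻¹ * M * (∫ t in Ioi x, ‖q t - qt t‖) +
          ∫ t in Ioi x, ‖lam‖⁻¹ * ‖q t‖ * ‖m t - mt t‖ := by
        rw [integral_add (hqq.const_mul _).integrableOn hku.integrableOn, integral_const_mul]
    _ ≤ _ := by gcongr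

theorem norm_sub_le_of_jost (him : 0 ≤ lam.im) {qt mt : ℝ → ℂ} (hq : Integrable q)
    (hqt : Integrable qt) (hm : Measurable m) (hmt : Measurable mt)
    {C M : ℝ} (hC : ∀ x, ‖m x‖ ≤ C) (hM : ∀ x, ‖mt x‖ ≤ M)
    (heq : ∀ x, m x = 1 + ∫ t in Ioi x, D lam (t - x) * q t * m t)
    (heqt : ∀ x, mt x = 1 + ∫ t in Ioi x, D lam (t - x) * qt t * mt t) (x : ℝ) :
    ‖m x - mt x‖ ≤ ‖lam‖⁻¹ * M * (∫ t, ‖q t - qt t‖) *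
      Real.exp (∫ t in Ioi x, ‖lam‖⁻¹ * ‖q t‖) :=
  le_mul_exp_integral_Ioi_of_le_add_integral_Ioi (u := fun t => ‖m t - mt t‖)
    (hq.norm.const_mul _) (Eventually.of_forall fun t => by positivity)
    (integrable_norm_mul_norm_sub hq hm hmt hC hM _)
    (norm_sub_le_integral_of_jost him hq hqt hm hmt hC hM heq heqt) x

end Jost

theorem jost_solution_lipschitz_general (q qt : ℝ → ℂ) (hq : Integrable q) (hqt : Integrable qt)
    (α : ℝ) (hqa : (∫ t, ‖q t‖) ≤ α) (hqta : (∫ t, ‖qt t‖) ≤ α)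
    (lam : ℂ) (him : 0 ≤ lam.im)
    (m mt : ℝ → ℂ) (hmeas : Measurable m) (hmeast : Measurable mt)
    (hbd : ∃ C, ∀ x, ‖m x‖ ≤ C) (hbdt : ∃ C, ∀ x, ‖mt x‖ ≤ C)
    (heq : ∀ x, m x = 1 + ∫ t in Set.Ioi x, D lam (t - x) * q t * m t)
    (heqt : ∀ x, mt x = 1 + ∫ t in Set.Ioi x, D lam (t - x) * qt t * mt t) :
    ∀ x, ‖m x - mt x‖ ≤ Real.exp (2 * α / ‖lam‖) *
      ((∫ t, ‖q t - qt t‖) / ‖lam‖) := by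
  intro x
  obtain ⟨C, hC⟩ := hbd
  obtain ⟨Ct, hCt⟩ := hbdt
  have hM : ∀ t, ‖mt t‖ ≤ Real.exp (‖lam‖⁻¹ * α) := fun t =>
    (norm_le_exp_of_jost him hqt hmeast hCt heqt t).trans
      (Real.exp_le_exp.2 (integral_Ioi_const_mul_norm_le hqt (by positivity) hqta t))
  calc ‖m x - mt x‖
      ≤ ‖lam‖⁻¹ * Real.exp (‖lam‖⁻¹ * α) * (∫ t, ‖q t - qt t‖) *
          Real.exp (∫ t in Ioi x, ‖lam‖⁻¹ * ‖q t‖) :=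
        norm_sub_le_of_jost him hq hqt hmeas hmeast hC hM heq heqt x
    _ ≤ ‖lam‖⁻¹ * Real.exp (‖lam‖⁻¹ * α) * (∫ t, ‖q t - qt t‖) * Real.exp (‖lam‖⁻¹ * α) := by
        gcongr
        exact integral_Ioi_const_mul_norm_le hq (by positivity) hqa x
    _ = Real.exp (2 * α / ‖lam‖) * ((∫ t, ‖q t - qt t‖) / ‖lam‖) := by
        rw [show 2 * α / ‖lam‖ = ‖lam‖⁻¹ * α + ‖lam‖⁻¹ * α by ring, Real.exp_add]
        ring

theorem jost_solution_lipschitz (q qt : ℝ → ℂ) (hq : Integrable q) (hqt : Integrable qt)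
    (α : ℝ) (hα : 0 < α) (hqa : (∫ t, ‖q t‖) ≤ α) (hqta : (∫ t, ‖qt t‖) ≤ α)
    (lam : ℂ) (him : 0 ≤ lam.im) (hne : lam ≠ 0)
    (m mt : ℝ → ℂ) (hmeas : Measurable m) (hmeast : Measurable mt)
    (hbd : ∃ C, ∀ x, ‖m x‖ ≤ C) (hbdt : ∃ C, ∀ x, ‖mt x‖ ≤ C)
    (heq : ∀ x, m x = 1 + ∫ t in Set.Ioi x, D lam (t - x) * q t * m t)
    (heqt : ∀ x, mt x = 1 + ∫ t in Set.Ioi x, D lam (t - x) * qt t * mt t) :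
    ∀ x, ‖m x - mt x‖ ≤ Real.exp (2 * α / ‖lam‖) *
      ((∫ t, ‖q t - qt t‖) / ‖lam‖) :=
  jost_solution_lipschitz_general q qt hq hqt α hqa hqta lam him m mt hmeas hmeast hbd hbdt heq heqt
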